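/- arXiv:2208.03989 — 2 statements merged into one kernel-verified Lean document; each statement's English description precedes it below -/
import Mathlib

section
/- (Theorem 1, case 2.) Suppose l < i, l < j, i ≤ l + D, and i + B < u (i.e., i ≤ min(D + l, u − B − 1): the lower bound l is reachable but the upper bound u is not). Then the cardinality of 𝕊_{ij}^B(l,u) equals C(K, B) − C(K, B_l), where B_l = B + l − j. -/
/-!
A path with `B` up-steps never rises more than `B` above its start, so when `i + B < u` the
bound `u` is irrelevant and `𝕊_{ij}^B(l,u)` consists of the bridges from `i` to `j` that never
visit `l`. A ±1 path is determined by its start and the set of positions of its up-steps, so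
there are `C(K, B)` bridges in all. Reflecting a bridge in the level `l` from its first visit
to `l` on (André's reflection principle) matches the bridges that visit `l` with all bridges
from `i` to `2l - j`; these have `B_l` up-steps, hence number `C(K, B_l)`.
-/

/-- An integer grid bridge from `i` to `j` with `B` upward jumps and `D` downward
jumps. -/
def IsBridge (i j : ℤ) (B D : ℕ) (ω : Fin (B + D + 1) → ℤ) : Prop :=
  ω 0 = i ∧ ω (Fin.last (B + D)) = j ∧
    (∀ k : Fin (B + D), |ω k.succ - ω k.castSucc| = 1) ∧
    (Finset.univ.filter (fun k : Fin (B + D) => ω k.succ = ω k.castSucc + 1)).card = B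

/-- `𝕊_{ij}^B(l,u)`: bridges staying strictly between `l` and `u`. -/
def BoundedBridges (i j l u : ℤ) (B D : ℕ) : Set (Fin (B + D + 1) → ℤ) :=
  {ω | IsBridge i j B D ω ∧ ∀ k : Fin (B + D + 1), l < ω k ∧ ω k < u}

open Finset

section LatticePath

variable {n : ℕ}

def IsLatticePath (ω : Fin (n + 1) → ℤ) : Prop :=
  ∀ k : Fin n, |ω k.succ - ω k.castSucc| = 1

def upSteps (ω : Fin (n + 1) → ℤ) : Finset (Fin n) :=
  {k | ω k.succ = ω k.castSucc + 1}

lemma card_filter_val_lt_succ (S : Finset (Fin n)) (k : Fin n) :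
    #{t ∈ S | t.val < k.val + 1} = #{t ∈ S | t.val < k.val} + if k ∈ S then 1 else 0 := by
  have hsplit : {t ∈ S | t.val < k.val + 1} = {t ∈ S | t.val < k.val} ∪ {t ∈ S | t = k} := by
    rw [← filter_or]
    exact filter_congr fun t _ ↦ by rw [Nat.lt_succ_iff_lt_or_eq, Fin.val_inj]
  rw [hsplit, card_union_of_disjoint, filter_eq']
  · split <;> simp
  · exact disjoint_filter.2 fun t _ h ↦ Fin.ne_of_lt h

/-- The path starting at `i` whose up-steps are exactly the positions in `S`. -/
def pathOfUpSteps (i : ℤ) (S : Finset (Fin n)) (k : Fin (n + 1)) : ℤ :=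
  i + 2 * #{t ∈ S | t.val < k.val} - k

lemma pathOfUpSteps_zero (i : ℤ) (S : Finset (Fin n)) : pathOfUpSteps i S 0 = i := by
  simp [pathOfUpSteps]

lemma pathOfUpSteps_succ (i : ℤ) (S : Finset (Fin n)) (k : Fin n) :
    pathOfUpSteps i S k.succ = pathOfUpSteps i S k.castSucc + if k ∈ S then 1 else -1 := by
  simp only [pathOfUpSteps, Fin.val_succ, Fin.val_castSucc, card_filter_val_lt_succ]
  split <;> push_cast <;> ring

lemma pathOfUpSteps_last (i : ℤ) (S : Finset (Fin n)) :
    pathOfUpSteps i S (Fin.last n) = i + 2 * #S - n := by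
  simp [pathOfUpSteps]

lemma pathOfUpSteps_le (i : ℤ) (S : Finset (Fin n)) (k : Fin (n + 1)) :
    pathOfUpSteps i S k ≤ i + #S := by
  have hS : #{t ∈ S | t.val < k.val} ≤ #S := card_filter_le _ _
  have hk : #{t ∈ S | t.val < k.val} ≤ k :=
    (card_le_card (filter_subset_filter _ (subset_univ S))).trans
      (Fin.card_filter_val_lt.trans_le (min_le_right _ _))
  simp only [pathOfUpSteps]
  omega

lemma isLatticePath_pathOfUpSteps (i : ℤ) (S : Finset (Fin n)) :
    IsLatticePath (pathOfUpSteps i S) := fun k ↦ by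
  rw [pathOfUpSteps_succ]; split <;> simp

lemma upSteps_pathOfUpSteps (i : ℤ) (S : Finset (Fin n)) : upSteps (pathOfUpSteps i S) = S := by
  ext k
  simp only [upSteps, mem_filter, mem_univ, true_and, pathOfUpSteps_succ]
  split <;> simp_all

lemma pathOfUpSteps_injective (i : ℤ) : (pathOfUpSteps (n := n) i).Injective :=
  Function.LeftInverse.injective (upSteps_pathOfUpSteps i)

namespace IsLatticePath

variable {ω : Fin (n + 1) → ℤ}

lemma succ_eq (hω : IsLatticePath ω) (k : Fin n) :
    ω k.succ = ω k.castSucc + if k ∈ upSteps ω then 1 else -1 := by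
  simp only [upSteps, mem_filter, mem_univ, true_and]
  have := hω k
  split <;> grind

lemma eq_pathOfUpSteps (hω : IsLatticePath ω) : ω = pathOfUpSteps (ω 0) (upSteps ω) := by
  funext k
  induction k using Fin.induction with
  | zero => rw [pathOfUpSteps_zero]
  | succ k ih => rw [hω.succ_eq, ih, pathOfUpSteps_succ]

lemma last_eq (hω : IsLatticePath ω) : ω (Fin.last n) = ω 0 + 2 * #(upSteps ω) - n := by
  rw [hω.eq_pathOfUpSteps, pathOfUpSteps_last, pathOfUpSteps_zero, upSteps_pathOfUpSteps]

lemma le_add_card_upSteps (hω : IsLatticePath ω) (k : Fin (n + 1)) :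
    ω k ≤ ω 0 + #(upSteps ω) := by
  rw [hω.eq_pathOfUpSteps]
  simpa [pathOfUpSteps_zero, upSteps_pathOfUpSteps] using pathOfUpSteps_le _ _ k

lemma exists_eq_of_le {l : ℤ} (hω : IsLatticePath ω) (h0 : l ≤ ω 0) {k : Fin (n + 1)}
    (hk : ω k ≤ l) : ∃ m, ω m = l := by
  induction k using Fin.induction with
  | zero => exact ⟨0, le_antisymm hk h0⟩
  | succ k ih =>
    by_cases hprev : ω k.castSucc ≤ l
    · exact ih hprev
    · have := hω k
      exact ⟨k.succ, by grind⟩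

end IsLatticePath

def latticeBridges (n : ℕ) (i j : ℤ) : Set (Fin (n + 1) → ℤ) :=
  {ω | ω 0 = i ∧ ω (Fin.last n) = j ∧ IsLatticePath ω}

lemma latticeBridges_eq_image {i j : ℤ} {b : ℕ} (hb : j = i + 2 * b - n) :
    latticeBridges n i j = pathOfUpSteps i '' {S | #S = b} := by
  ext ω
  constructor
  · rintro ⟨h0, hlast, hω⟩
    have := hω.last_eq
    refine ⟨upSteps ω, ?_, by rw [← h0, ← hω.eq_pathOfUpSteps]⟩
    simp only [Set.mem_ofPred_eq]
    omega
  · rintro ⟨S, rfl, rfl⟩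
    exact ⟨pathOfUpSteps_zero i S, by rw [pathOfUpSteps_last, hb],
      isLatticePath_pathOfUpSteps i S⟩

lemma latticeBridges_finite {i j : ℤ} {b : ℕ} (hb : j = i + 2 * b - n) :
    (latticeBridges n i j).Finite := by
  rw [latticeBridges_eq_image hb]
  exact (Set.toFinite _).image _

lemma ncard_latticeBridges {i j : ℤ} {b : ℕ} (hb : j = i + 2 * b - n) :
    (latticeBridges n i j).ncard = n.choose b := by
  rw [latticeBridges_eq_image hb, Set.ncard_image_of_injective _ (pathOfUpSteps_injective i)]
  have : {S : Finset (Fin n) | #S = b} = (univ.powersetCard b : Finset (Finset (Fin n))) := by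
    ext S; simp
  rw [this, Set.ncard_coe_finset, card_powersetCard, card_univ, Fintype.card_fin]

end LatticePath

section Reflection

variable {n : ℕ} {l : ℤ}

/-- André's reflection of `ω` in the level `l`. -/
noncomputable def reflectAfterHit (l : ℤ) (ω : Fin (n + 1) → ℤ) (k : Fin (n + 1)) : ℤ :=
  open scoped Classical in if ∃ m ≤ k, ω m = l then 2 * l - ω k else ω k

lemma reflectAfterHit_of_hit {ω : Fin (n + 1) → ℤ} {k : Fin (n + 1)} (h : ∃ m ≤ k, ω m = l) :
    reflectAfterHit l ω k = 2 * l - ω k := by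
  rw [reflectAfterHit, if_pos h]

lemma reflectAfterHit_of_not_hit {ω : Fin (n + 1) → ℤ} {k : Fin (n + 1)}
    (h : ¬∃ m ≤ k, ω m = l) : reflectAfterHit l ω k = ω k := by
  rw [reflectAfterHit, if_neg h]

lemma reflectAfterHit_hit_iff (ω : Fin (n + 1) → ℤ) (k : Fin (n + 1)) :
    (∃ m ≤ k, reflectAfterHit l ω m = l) ↔ ∃ m ≤ k, ω m = l := by
  constructor
  · rintro ⟨m, hmk, hm⟩
    by_cases h : ∃ m' ≤ m, ω m' = l
    · obtain ⟨m', hm', hm'l⟩ := h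
      exact ⟨m', hm'.trans hmk, hm'l⟩
    · exact ⟨m, hmk, by rwa [reflectAfterHit_of_not_hit h] at hm⟩
  · rintro ⟨m, hmk, hm⟩
    exact ⟨m, hmk, by rw [reflectAfterHit_of_hit ⟨m, le_rfl, hm⟩, hm]; ring⟩

lemma reflectAfterHit_involutive : (reflectAfterHit (n := n) l).Involutive := fun ω ↦ by
  funext k
  by_cases h : ∃ m ≤ k, ω m = l
  · rw [reflectAfterHit_of_hit ((reflectAfterHit_hit_iff ω k).2 h), reflectAfterHit_of_hit h]
    ring
  · rw [reflectAfterHit_of_not_hit (mt (reflectAfterHit_hit_iff ω k).1 h),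
      reflectAfterHit_of_not_hit h]

lemma IsLatticePath.reflectAfterHit {ω : Fin (n + 1) → ℤ} (hω : IsLatticePath ω) :
    IsLatticePath (reflectAfterHit l ω) := fun k ↦ by
  by_cases hprev : ∃ m ≤ k.castSucc, ω m = l
  · have hnext : ∃ m ≤ k.succ, ω m = l :=
      let ⟨m, hm, hml⟩ := hprev; ⟨m, hm.trans Fin.castSucc_lt_succ.le, hml⟩
    rw [reflectAfterHit_of_hit hnext, reflectAfterHit_of_hit hprev, ← abs_neg]
    convert hω k using 2
    ring
  · rw [reflectAfterHit_of_not_hit hprev]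
    by_cases hnext : ∃ m ≤ k.succ, ω m = l
    · -- the first visit to `l` is at `k.succ`, which the reflection fixes
      have hl : ω k.succ = l := by
        obtain ⟨m, hm, hml⟩ := hnext
        rcases hm.lt_or_eq with hm | rfl
        · exact absurd ⟨m, Fin.le_castSucc_iff.2 hm, hml⟩ hprev
        · exact hml
      rw [reflectAfterHit_of_hit hnext, hl, show 2 * l - l = ω k.succ by omega]
      exact hω k
    · rw [reflectAfterHit_of_not_hit hnext]
      exact hω k

lemma reflectAfterHit_bijOn {i j : ℤ} (hi : l < i) (hj : l ≤ j) :
    Set.BijOn (reflectAfterHit l) (latticeBridges n i j ∩ {ω | ∃ m, ω m = l})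
      (latticeBridges n i (2 * l - j)) := by
  have hzero {ω : Fin (n + 1) → ℤ} (h0 : ω 0 = i) : reflectAfterHit l ω 0 = i := by
    rw [reflectAfterHit_of_not_hit (by simp [h0, hi.ne']), h0]
  have hlast {ω : Fin (n + 1) → ℤ} (h : ∃ m, ω m = l) :
      reflectAfterHit l ω (Fin.last n) = 2 * l - ω (Fin.last n) :=
    reflectAfterHit_of_hit (let ⟨m, hm⟩ := h; ⟨m, Fin.le_last m, hm⟩)
  refine Set.InvOn.bijOn ⟨fun ω _ ↦ reflectAfterHit_involutive ω,
    fun ω _ ↦ reflectAfterHit_involutive ω⟩ ?_ ?_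
  · rintro ω ⟨⟨h0, hend, hω⟩, hhit⟩
    exact ⟨hzero h0, by rw [hlast hhit, hend], hω.reflectAfterHit⟩
  · rintro ω ⟨h0, hend, hω⟩
    have hhit : ∃ m, ω m = l := hω.exists_eq_of_le (h0 ▸ hi.le) (k := Fin.last n) (by omega)
    refine ⟨⟨hzero h0, by rw [hlast hhit, hend]; ring, hω.reflectAfterHit⟩, ?_⟩
    obtain ⟨m, hm⟩ := (reflectAfterHit_hit_iff ω (Fin.last n)).2
      (let ⟨m, hm⟩ := hhit; ⟨m, Fin.le_last m, hm⟩)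
    exact ⟨m, hm.2⟩

lemma ncard_latticeBridges_hitting {i j : ℤ} {b : ℕ} (hi : l < i) (hj : l ≤ j)
    (hb : 2 * l - j = i + 2 * b - n) :
    (latticeBridges n i j ∩ {ω | ∃ m, ω m = l}).ncard = n.choose b := by
  have hbij := reflectAfterHit_bijOn (n := n) hi hj
  rw [← ncard_latticeBridges hb, ← hbij.image_eq, hbij.injOn.ncard_image]

end Reflection

lemma isBridge_iff_mem_latticeBridges {i j : ℤ} {B D : ℕ} (hj : j = i + B - D)
    (ω : Fin (B + D + 1) → ℤ) : IsBridge i j B D ω ↔ ω ∈ latticeBridges (B + D) i j := by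
  refine ⟨fun ⟨h0, hlast, hω, _⟩ ↦ ⟨h0, hlast, hω⟩, fun ⟨h0, hlast, hω⟩ ↦ ⟨h0, hlast, hω, ?_⟩⟩
  have := hω.last_eq
  change #(upSteps ω) = B
  push_cast at this
  omega

lemma boundedBridges_eq_sdiff {i j l u : ℤ} {B D : ℕ} (hj : j = i + B - D) (hli : l < i)
    (hu : i + B < u) :
    BoundedBridges i j l u B D = latticeBridges (B + D) i j \ {ω | ∃ m, ω m = l} := by
  ext ω
  simp only [BoundedBridges, isBridge_iff_mem_latticeBridges hj, Set.mem_ofPred_eq,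
    Set.mem_sdiff, not_exists]
  refine ⟨fun ⟨hω, hbd⟩ ↦ ⟨hω, fun m ↦ (hbd m).1.ne'⟩,
    fun ⟨hω, hnot⟩ ↦ ⟨hω, fun k ↦ ⟨?_, ?_⟩⟩⟩
  · by_contra! hk
    obtain ⟨m, hm⟩ := hω.2.2.exists_eq_of_le (hω.1 ▸ hli.le) hk
    exact hnot m hm
  · have hcount : #(upSteps ω) = B := ((isBridge_iff_mem_latticeBridges hj ω).2 hω).2.2.2
    have := hω.2.2.le_add_card_upSteps k
    rw [hω.1, hcount] at this
    omega

/-- Theorem 1, case 2: if `l < i`, `l < j`, `i ≤ l + D` and `i + B < u` (lower bound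
reachable, upper bound not), then `card 𝕊_{ij}^B(l,u) = C(K, B) - C(K, B_l)` with
`B_l = B + l - j`. -/
theorem bounded_bridge_count_case2 (i j l u : ℤ) (B D : ℕ) (hj : j = i + B - D)
    (hli : l < i) (hlj : l < j) (hl : i ≤ l + D) (hu : i + B < u) :
    (BoundedBridges i j l u B D).ncard
      = Nat.choose (B + D) B - Nat.choose (B + D) (((B : ℤ) + l - j).toNat) := by
  have hB : j = i + 2 * B - (B + D : ℕ) := by push_cast; omega
  have hBl : 2 * l - j = i + 2 * ((B : ℤ) + l - j).toNat - (B + D : ℕ) := by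
    rw [Int.toNat_of_nonneg (by omega)]; push_cast; omega
  rw [boundedBridges_eq_sdiff hj hli hu, ← ncard_latticeBridges hB,
    ← ncard_latticeBridges_hitting hli hlj.le hBl,
    ← Set.ncard_inter_add_ncard_sdiff_eq_ncard _ {ω | ∃ m, ω m = l} (latticeBridges_finite hB)]
  omega
end

section
/- (Theorem 1, case 3.) Suppose i < u, j < u, i > l + D, and i ≥ u − B (i.e., i ≥ max(D + l + 1, u − B): the upper bound u is reachable but the lower bound l is not). Then the cardinality of 𝕊_{ij}^B(l,u) equals C(K, B) − C(K, B_u), where B_u = B − j + u. -/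
/-!
Record a bridge by the set `S ⊆ [0, K)` of times of its up-steps; these sets are exactly the
`B`-subsets of `[0, K)`. Such a walk never drops below `i - D`, so the lower barrier `l` is
irrelevant, and it remains to count the walks that reach `u`. Reflecting a walk in `u` after
its first visit to `u` (i.e. toggling `S` on `[τ, K)`) is an involution that matches them with
the walks having `B_u` up-steps: these end at `2u - j ≥ u`, so they all reach `u`.
-/

open Finset

namespace LatticePath

def walk (i : ℤ) (S : Finset ℕ) (m : ℕ) : ℤ :=
  i + ∑ k ∈ range m, if k ∈ S then 1 else -1

variable {i u : ℤ} {S : Finset ℕ} {K m n : ℕ}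

@[simp] lemma walk_zero : walk i S 0 = i := by simp [walk]

lemma walk_succ : walk i S (m + 1) = walk i S m + if m ∈ S then 1 else -1 := by
  simp only [walk, sum_range_succ, add_assoc]

lemma walk_sub_walk (h : n ≤ m) :
    walk i S m - walk i S n = ∑ k ∈ Ico n m, if k ∈ S then 1 else -1 := by
  simp only [walk, ← sum_range_add_sum_Ico _ h]
  ring

lemma abs_walk_sub_walk_le (h : n ≤ m) : |walk i S m - walk i S n| ≤ m - n := by
  rw [walk_sub_walk h]
  calc |∑ k ∈ Ico n m, if k ∈ S then (1 : ℤ) else -1|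
      ≤ ∑ k ∈ Ico n m, |if k ∈ S then (1 : ℤ) else -1| := abs_sum_le_sum_abs _ _
    _ = m - n := by
      simp only [apply_ite, abs_one, abs_neg, ite_self, sum_const, Nat.card_Ico, nsmul_one]
      push_cast [h]
      ring

lemma walk_of_subset (hS : S ⊆ range K) : walk i S K = i + 2 * #S - K := by
  rw [walk, sum_ite, sum_const, sum_const, filter_not, filter_mem_eq_inter,
    inter_eq_right.2 hS, card_sdiff_of_subset hS, card_range]
  simp only [nsmul_eq_mul, mul_one, mul_neg]
  push_cast [card_le_card hS |>.trans_eq (card_range K)]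
  ring

/-- Both `walk m ≥ i - m` and `walk m ≥ walk K - (K - m)`; the two bounds cross at
`m = K - #S`. -/
lemma le_walk (hS : S ⊆ range K) (hm : m ≤ K) : i + #S - K ≤ walk i S m := by
  have h₀ := abs_le.1 (abs_walk_sub_walk_le (i := i) (S := S) (Nat.zero_le m))
  have hK := abs_le.1 (abs_walk_sub_walk_le (i := i) (S := S) hm)
  rw [walk_of_subset hS] at hK
  rw [walk_zero] at h₀
  push_cast [hm] at hK h₀
  omega

def reflectFrom (n K : ℕ) (S : Finset ℕ) : Finset ℕ := symmDiff S (Ico n K)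

lemma reflectFrom_reflectFrom : reflectFrom n K (reflectFrom n K S) = S :=
  symmDiff_symmDiff_cancel_right _ _

lemma reflectFrom_subset (hS : S ⊆ range K) : reflectFrom n K S ⊆ range K := by
  intro k hk
  rcases mem_symmDiff.1 hk with ⟨hk, -⟩ | ⟨hk, -⟩
  · exact hS hk
  · exact mem_range.2 (mem_Ico.1 hk).2

lemma walk_reflectFrom_of_le (hm : m ≤ n) : walk i (reflectFrom n K S) m = walk i S m := by
  refine congrArg (i + ·) (sum_congr rfl fun k hk => ?_)
  have : k ∉ Ico n K := fun h => by simp at hk h; omega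
  simp [reflectFrom, mem_symmDiff, this]

lemma walk_reflectFrom_of_le_of_le (hnm : n ≤ m) (hm : m ≤ K) :
    walk i (reflectFrom n K S) m = 2 * walk i S n - walk i S m := by
  have hflip : ∀ k ∈ Ico n m, (if k ∈ reflectFrom n K S then (1 : ℤ) else -1) =
      -(if k ∈ S then 1 else -1) := by
    intro k hk
    have : k ∈ Ico n K := by simp at hk ⊢; omega
    by_cases hkS : k ∈ S <;> simp [reflectFrom, mem_symmDiff, this, hkS]
  have h := walk_sub_walk (i := i) (S := reflectFrom n K S) hnm
  rw [sum_congr rfl hflip, sum_neg_distrib, ← walk_sub_walk hnm,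
    walk_reflectFrom_of_le le_rfl] at h
  linarith

/-- This is `0` when the walk never reaches `u`. -/
noncomputable def hitTime (u i : ℤ) (S : Finset ℕ) : ℕ := sInf {m | u ≤ walk i S m}

lemma hitTime_le (h : u ≤ walk i S m) : hitTime u i S ≤ m := Nat.sInf_le h

lemma le_walk_hitTime (h : u ≤ walk i S m) : u ≤ walk i S (hitTime u i S) :=
  Nat.sInf_mem (s := {m | u ≤ walk i S m}) ⟨m, h⟩

lemma walk_lt_of_lt_hitTime (h : m < hitTime u i S) : walk i S m < u :=
  lt_of_not_ge (Nat.notMem_of_lt_sInf h)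

lemma walk_hitTime (hiu : i < u) (h : u ≤ walk i S m) : walk i S (hitTime u i S) = u := by
  have hhit := le_walk_hitTime h
  obtain ⟨n, hn⟩ : ∃ n, hitTime u i S = n + 1 := by
    refine Nat.exists_eq_succ_of_ne_zero fun h0 => ?_
    rw [h0, walk_zero] at hhit
    omega
  have hprev := walk_lt_of_lt_hitTime (i := i) (u := u) (S := S) (m := n) (by omega)
  have hstep := walk_succ (i := i) (S := S) (m := n)
  rw [hn] at hhit ⊢
  split_ifs at hstep <;> omega

lemma hitTime_eq_of_walk_eq (h : walk i S n = u) (hlt : ∀ m < n, walk i S m < u) :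
    hitTime u i S = n :=
  le_antisymm (hitTime_le h.ge) (le_of_not_gt fun hn => (hlt _ hn).not_ge (le_walk_hitTime h.ge))

noncomputable def reflectAtHit (u i : ℤ) (K : ℕ) (S : Finset ℕ) : Finset ℕ :=
  reflectFrom (hitTime u i S) K S

lemma walk_reflectAtHit_hitTime (hiu : i < u) (hu : u ≤ walk i S m) :
    walk i (reflectAtHit u i K S) (hitTime u i S) = u := by
  rw [reflectAtHit, walk_reflectFrom_of_le le_rfl, walk_hitTime hiu hu]

lemma hitTime_reflectAtHit (hiu : i < u) (hu : u ≤ walk i S m) :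
    hitTime u i (reflectAtHit u i K S) = hitTime u i S := by
  refine hitTime_eq_of_walk_eq (walk_reflectAtHit_hitTime hiu hu) fun k hk => ?_
  rw [reflectAtHit, walk_reflectFrom_of_le hk.le]
  exact walk_lt_of_lt_hitTime hk

lemma reflectAtHit_reflectAtHit (hiu : i < u) (hu : u ≤ walk i S m) :
    reflectAtHit u i K (reflectAtHit u i K S) = S := by
  rw [reflectAtHit, hitTime_reflectAtHit hiu hu, reflectAtHit, reflectFrom_reflectFrom]

lemma card_reflectAtHit (hiu : i < u) (hS : S ⊆ range K) (hm : m ≤ K) (hu : u ≤ walk i S m) :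
    (#(reflectAtHit u i K S) + #S : ℤ) + i = K + u := by
  have h := walk_reflectFrom_of_le_of_le (i := i) (S := S) ((hitTime_le hu).trans hm) le_rfl
  rw [walk_of_subset (reflectFrom_subset hS), walk_of_subset hS, walk_hitTime hiu hu] at h
  rw [reflectAtHit]
  linarith

theorem card_filter_exists_le_walk {B B' : ℕ} (hiu : i < u) (hB : B ≤ B')
    (hK : (B + B' : ℤ) + i = K + u) :
    #{S ∈ powersetCard B (range K) | ∃ m ≤ K, u ≤ walk i S m} = K.choose B' := by
  refine (card_nbij' (reflectAtHit u i K) (reflectAtHit u i K) ?_ ?_ ?_ ?_).trans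
    (by rw [card_powersetCard, card_range]) <;> intro S hS <;>
    simp only [coe_filter, mem_coe, mem_powersetCard, Set.mem_ofPred_eq] at hS ⊢
  · obtain ⟨⟨hS, rfl⟩, m, hm, hu⟩ := hS
    refine ⟨reflectFrom_subset hS, ?_⟩
    have := card_reflectAtHit hiu hS hm hu
    omega
  · obtain ⟨hS, rfl⟩ := hS
    have hu : u ≤ walk i S K := by rw [walk_of_subset hS]; omega
    refine ⟨⟨reflectFrom_subset hS, ?_⟩, hitTime u i S, hitTime_le hu,
      (walk_reflectAtHit_hitTime hiu hu).ge⟩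
    have := card_reflectAtHit hiu hS le_rfl hu
    omega
  · obtain ⟨-, m, -, hu⟩ := hS
    exact reflectAtHit_reflectAtHit hiu hu
  · obtain ⟨hS, rfl⟩ := hS
    exact reflectAtHit_reflectAtHit hiu (m := K) (by rw [walk_of_subset hS]; omega)

def upSteps (ω : Fin (K + 1) → ℤ) : Finset ℕ :=
  Finset.map Fin.valEmbedding {k : Fin K | ω k.succ = ω k.castSucc + 1}

lemma card_upSteps (ω : Fin (K + 1) → ℤ) :
    #(upSteps ω) = #{k : Fin K | ω k.succ = ω k.castSucc + 1} :=
  card_map _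

lemma upSteps_subset (ω : Fin (K + 1) → ℤ) : upSteps ω ⊆ range K := by
  intro k hk
  obtain ⟨k, -, rfl⟩ := mem_map.1 hk
  exact mem_range.2 k.isLt

lemma val_mem_upSteps {ω : Fin (K + 1) → ℤ} {k : Fin K} :
    (k : ℕ) ∈ upSteps ω ↔ ω k.succ = ω k.castSucc + 1 := by
  simp [upSteps, Fin.val_inj]

lemma eq_walk_upSteps {ω : Fin (K + 1) → ℤ} (hω : ∀ k : Fin K, |ω k.succ - ω k.castSucc| = 1)
    (m : Fin (K + 1)) : ω m = walk (ω 0) (upSteps ω) m := by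
  induction m using Fin.induction with
  | zero => simp
  | succ k ih =>
    rw [Fin.val_succ, walk_succ, ← Fin.val_castSucc, ← ih]
    split_ifs with hk
    · exact val_mem_upSteps.1 hk
    · rcases abs_eq zero_le_one |>.1 (hω k) with h | h
      · exact absurd (val_mem_upSteps.2 (by linarith)) hk
      · linarith

lemma upSteps_walk (hS : S ⊆ range K) : upSteps (fun m : Fin (K + 1) => walk i S m) = S := by
  ext k
  by_cases hk : k < K
  · lift k to Fin K using hk
    rw [val_mem_upSteps, Fin.val_succ, Fin.val_castSucc, walk_succ]
    split_ifs <;> simp [*]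
  · exact iff_of_false (fun h => hk (mem_range.1 (upSteps_subset _ h)))
      fun h => hk (mem_range.1 (hS h))

lemma injOn_walk (K : ℕ) (i : ℤ) :
    Set.InjOn (fun S (m : Fin (K + 1)) => walk i S m) {S | S ⊆ range K} :=
  Set.LeftInvOn.injOn (f₁' := upSteps) fun _ hS => upSteps_walk hS

lemma isBridge_iff_exists_walk {j : ℤ} {B D : ℕ} (hj : j = i + B - D)
    {ω : Fin (B + D + 1) → ℤ} :
    IsBridge i j B D ω ↔
      ∃ S ∈ powersetCard B (range (B + D)), (fun m : Fin (B + D + 1) => walk i S m) = ω := by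
  constructor
  · rintro ⟨h0, -, hstep, hcard⟩
    refine ⟨upSteps ω, mem_powersetCard.2 ⟨upSteps_subset ω, card_upSteps ω ▸ hcard⟩, ?_⟩
    funext m
    rw [eq_walk_upSteps hstep m, h0]
  · rintro ⟨S, hS, rfl⟩
    obtain ⟨hS, hcard⟩ := mem_powersetCard.1 hS
    refine ⟨walk_zero, ?_, fun k => ?_, ?_⟩ <;> beta_reduce
    · rw [Fin.val_last, walk_of_subset hS, hcard, hj]
      push_cast
      ring
    · rw [Fin.val_succ, Fin.val_castSucc, walk_succ]
      split_ifs <;> simp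
    · rw [← card_upSteps (fun m : Fin (B + D + 1) => walk i S m), upSteps_walk hS, hcard]

lemma boundedBridges_eq_image {j l : ℤ} {B D : ℕ} (hj : j = i + B - D) (hl : l + D < i) :
    BoundedBridges i j l u B D = (fun S (m : Fin (B + D + 1)) => walk i S m) ''
      ↑(filter (fun S => ∀ m ≤ B + D, walk i S m < u) (powersetCard B (range (B + D)))) := by
  ext ω
  simp only [BoundedBridges, Set.mem_ofPred_eq, isBridge_iff_exists_walk hj, coe_filter,
    Set.mem_image]
  constructor
  · rintro ⟨⟨S, hS, rfl⟩, hbounds⟩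
    exact ⟨S, ⟨hS, fun m hm => (hbounds ⟨m, Nat.lt_succ_of_le hm⟩).2⟩, rfl⟩
  · rintro ⟨S, ⟨hS, hu⟩, rfl⟩
    refine ⟨⟨S, hS, rfl⟩, fun m => ⟨?_, hu m m.is_le⟩⟩
    obtain ⟨hS, hcard⟩ := mem_powersetCard.1 hS
    have := le_walk (i := i) hS m.is_le
    push_cast [hcard] at this ⊢
    omega

end LatticePath

open LatticePath

theorem bounded_bridge_count_case3_general (i j l u : ℤ) (B D : ℕ) (hj : j = i + B - D)
    (hiu : i < u) (hju : j < u) (hl : l + D < i) :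
    (BoundedBridges i j l u B D).ncard
      = Nat.choose (B + D) B - Nat.choose (B + D) (((B : ℤ) - j + u).toNat) := by
  have hinj : Set.InjOn (fun S (m : Fin (B + D + 1)) => walk i S m)
      ↑(filter (fun S => ∀ m ≤ B + D, walk i S m < u) (powersetCard B (range (B + D)))) :=
    (injOn_walk _ i).mono fun S hS => (mem_powersetCard.1 (mem_filter.1 hS).1).1
  rw [boundedBridges_eq_image hj hl, hinj.ncard_image, Set.ncard_coe_finset]
  have hsplit := card_filter_add_card_filter_not (s := powersetCard B (range (B + D)))
    fun S => ∃ m ≤ B + D, u ≤ walk i S m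
  simp only [not_exists, not_and, not_le] at hsplit
  rw [card_filter_exists_le_walk (B' := ((B : ℤ) - j + u).toNat) hiu (by omega) (by omega),
    card_powersetCard, card_range] at hsplit
  omega

/-- Theorem 1, case 3: if `i < u`, `j < u`, `i > l + D` and `i ≥ u - B` (upper bound
reachable, lower bound not), then `card 𝕊_{ij}^B(l,u) = C(K, B) - C(K, B_u)` with
`B_u = B - j + u`. -/
theorem bounded_bridge_count_case3 (i j l u : ℤ) (B D : ℕ) (hj : j = i + B - D)
    (hiu : i < u) (hju : j < u) (hl : l + D < i) (hu : u - B ≤ i) :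
    (BoundedBridges i j l u B D).ncard
      = Nat.choose (B + D) B - Nat.choose (B + D) (((B : ℤ) - j + u).toNat) :=
  bounded_bridge_count_case3_general i j l u B D hj hiu hju hl
end
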